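/- Let G be a group and let a, b be elements of G satisfying a*b*a = b*a*b and a^2 = b*a^2*b. Then a^4 = b^4 and a^8 = 1 (hence also b^8 = 1). -/
import Mathlib


theorem stmt_1 {G : Type*} [Group G] (a b : G)
    (hbraid : a * b * a = b * a * b) (hrel : a ^ 2 = b * a ^ 2 * b) :
    a ^ 4 = b ^ 4 ∧ a ^ 8 = 1 ∧ b ^ 8 = 1 := by
  -- d := a*b*a
  have hd : a * (a*b*a) = (a*b*a) * b := by
    calc a*(a*b*a) = a*(b*a*b) := by rw [hbraid]
      _ = (a*b*a)*b := by group
  have hd' : b * (a*b*a) = (a*b*a) * a := by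
    calc b*(a*b*a) = (b*a*b)*a := by group
      _ = (a*b*a)*a := by rw [hbraid]
  have hd2 : (a*b*a)*(a*b*a) = a^4 := by
    calc (a*b*a)*(a*b*a) = a*(b*a^2*b)*a := by rw [pow_two]; group
      _ = a*a^2*a := by rw [← hrel]
      _ = a^4 := by group
  have ha_conj : a = (a*b*a) * b * (a*b*a)⁻¹ := by rw [← hd]; group
  have ha4 : a^4 = (a*b*a) * b^4 * (a*b*a)⁻¹ := by
    conv_lhs => rw [ha_conj]
    rw [conj_pow]
  have hb4 : b^4 = a^4 := by
    have h1 : b^4 = (a*b*a)⁻¹ * a^4 * (a*b*a) := by rw [ha4]; group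
    rw [h1, ← hd2]; group
  have hstep : b⁻¹ * a^2 = a^2 * b := by
    conv_lhs => rw [hrel]
    group
  have hbig : b⁻¹*(b⁻¹*(b⁻¹*(b⁻¹*a^2))) = a^2*b*b*b*b := by
    calc b⁻¹*(b⁻¹*(b⁻¹*(b⁻¹*a^2))) = b⁻¹*(b⁻¹*(b⁻¹*(a^2*b))) := by rw [hstep]
      _ = b⁻¹*(b⁻¹*((b⁻¹*a^2)*b)) := by group
      _ = b⁻¹*(b⁻¹*((a^2*b)*b)) := by rw [hstep]
      _ = b⁻¹*((b⁻¹*a^2)*(b*b)) := by group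
      _ = b⁻¹*((a^2*b)*(b*b)) := by rw [hstep]
      _ = (b⁻¹*a^2)*(b*b*b) := by group
      _ = (a^2*b)*(b*b*b) := by rw [hstep]
      _ = a^2*b*b*b*b := by group
  have key2 : a^2 = a^4 * a^2 * a^4 := by
    have key : a^2 = b^4 * a^2 * b^4 := by
      calc a^2 = b*(b*(b*(b*(b⁻¹*(b⁻¹*(b⁻¹*(b⁻¹*a^2))))))) := by group
        _ = b*(b*(b*(b*(a^2*b*b*b*b)))) := by rw [hbig]
        _ = b^4*a^2*b^4 := by rw [show (b:G)^4 = b*b*b*b by rw [pow_succ, pow_succ, pow_succ, pow_one]]; group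
    rwa [hb4] at key
  have ha8 : a^8 = 1 := by
    calc a^8 = (a^2)⁻¹ * (a^4*a^2*a^4) := by group
      _ = (a^2)⁻¹ * a^2 := by rw [← key2]
      _ = 1 := by group
  have hb8 : b^8 = 1 := by
    calc b^8 = b^4*b^4 := by group
      _ = a^4*a^4 := by rw [hb4]
      _ = a^8 := by group
      _ = 1 := ha8
  exact ⟨hb4.symm, ha8, hb8⟩
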